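/- arXiv:math/0701193 — 4 statements merged into one kernel-verified Lean document; each statement's English description precedes it below -/
import Mathlib

section
/- Let $q \in \mathbb{C}$ be nonzero and not a root of unity, $N \in \mathbb{N}$, $\lambda = q^{-N}$, and define $\phi: \mathbb{C}[x] \to \mathbb{C}[x]$ by $\phi(x^n) = (1 - \lambda q^n)x^{n+1}$. Then $\ker\phi$ is one-dimensional, spanned by $x^N$, and $\mathrm{coker}\,\phi$ is two-dimensional, spanned by the classes of $1$ and $x^{N+1}$. -/
open Polynomial

/-- Let `q ∈ ℂ` be nonzero and not a root of unity, `N ∈ ℕ`,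
`λ = q^{-N}`, and `φ : ℂ[x] → ℂ[x]` the linear map with `φ(x^n) = (1 - λ q^n) x^{n+1}`.
Then `ker φ` is one-dimensional, spanned by `x^N`, and `coker φ` is two-dimensional,
spanned by the classes of `1` and `x^{N+1}`. -/
theorem stmt6 (q lam : ℂ) (N : ℕ) (hq : q ≠ 0) (hroot : ∀ n : ℕ, n ≠ 0 → q ^ n ≠ 1)
    (hlam : lam = (q ^ N)⁻¹)
    (φ : Polynomial ℂ →ₗ[ℂ] Polynomial ℂ)
    (hφ : ∀ n : ℕ, φ (X ^ n) = (1 - lam * q ^ n) • X ^ (n + 1)) :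
    LinearMap.ker φ = Submodule.span ℂ {X ^ N} ∧
    Submodule.span ℂ
        {(LinearMap.range φ).mkQ 1, (LinearMap.range φ).mkQ (X ^ (N + 1))} =
      (⊤ : Submodule ℂ _) ∧
    LinearIndependent ℂ
      ![(LinearMap.range φ).mkQ 1, (LinearMap.range φ).mkQ (X ^ (N + 1))] := by
  have hqN : (q : ℂ) ^ N ≠ 0 := pow_ne_zero _ hq
  -- injectivity of powers of q
  have hinj : ∀ a b : ℕ, q ^ a = q ^ b → a = b := by
    have key : ∀ a b : ℕ, a ≤ b → q ^ a = q ^ b → a = b := by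
      intro a b hab h
      have h1 : q ^ a * q ^ (b - a) = q ^ a * 1 := by
        rw [mul_one, ← pow_add, show a + (b - a) = b by omega]
        exact h.symm
      have h2 : q ^ (b - a) = 1 := mul_left_cancel₀ (pow_ne_zero a hq) h1
      by_contra hne
      exact hroot (b - a) (by omega) h2
    intro a b h
    rcases le_total a b with hab | hab
    · exact key a b hab h
    · exact (key b a hab h.symm).symm
  have hcz : ∀ n : ℕ, 1 - lam * q ^ n = 0 ↔ n = N := by
    intro n
    constructor
    · intro h
      have h1 : lam * q ^ n = 1 := (sub_eq_zero.mp h).symm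
      rw [hlam] at h1
      have h2 : q ^ n = q ^ N := by
        field_simp at h1
        exact h1
      exact hinj n N h2
    · rintro rfl
      rw [hlam, inv_mul_cancel₀ hqN, sub_self]
  have hcN : 1 - lam * q ^ N = 0 := (hcz N).mpr rfl
  -- coefficient computations
  have hmono : ∀ (n : ℕ) (a : ℂ), (monomial n a : ℂ[X]) = a • X ^ n := by
    intro n a
    rw [smul_eq_C_mul, C_mul_X_pow_eq_monomial]
  have hcoeff : ∀ (p : ℂ[X]) (m : ℕ),
      (φ p).coeff (m + 1) = (1 - lam * q ^ m) * p.coeff m := by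
    intro p
    induction p using Polynomial.induction_on' with
    | add p r hp hr => intro m; simp [map_add, hp, hr, mul_add]
    | monomial n a =>
      intro m
      rw [hmono, map_smul, hφ]
      simp only [coeff_smul, coeff_monomial, coeff_X_pow, smul_eq_mul]
      by_cases hnm : n = m
      · subst hnm; simp; ring
      · rw [if_neg (by omega), if_neg (fun h => hnm h.symm)]
        ring
  have hcoeff0 : ∀ p : ℂ[X], (φ p).coeff 0 = 0 := by
    intro p
    induction p using Polynomial.induction_on' with
    | add p r hp hr => simp [map_add, hp, hr]
    | monomial n a =>
      rw [hmono, map_smul, hφ]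
      simp [coeff_smul, coeff_X_pow]
  -- elements of the range have vanishing coefficients at 0 and N+1
  have hrange : ∀ r ∈ LinearMap.range φ, r.coeff 0 = 0 ∧ r.coeff (N + 1) = 0 := by
    rintro r ⟨p, rfl⟩
    refine ⟨hcoeff0 p, ?_⟩
    rw [hcoeff p N, hcN, zero_mul]
  -- kernel
  have hker : LinearMap.ker φ = Submodule.span ℂ {X ^ N} := by
    apply le_antisymm
    · intro p hp
      rw [LinearMap.mem_ker] at hp
      have hco : ∀ m, m ≠ N → p.coeff m = 0 := by
        intro m hm
        have h := hcoeff p m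
        rw [hp, coeff_zero] at h
        have hcm : 1 - lam * q ^ m ≠ 0 := fun h' => hm ((hcz m).mp h')
        exact (mul_eq_zero.mp h.symm).resolve_left hcm
      have hpe : p = p.coeff N • X ^ N := by
        ext k
        rw [coeff_smul, coeff_X_pow, smul_eq_mul]
        by_cases hk : k = N
        · subst hk; simp
        · rw [hco k hk, if_neg hk, mul_zero]
      rw [hpe]
      exact Submodule.smul_mem _ _ (Submodule.mem_span_singleton_self _)
    · rw [Submodule.span_le, Set.singleton_subset_iff]
      simp only [SetLike.mem_coe, LinearMap.mem_ker]
      rw [hφ N, hcN, zero_smul]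
  -- every polynomial is in span {1, X^{N+1}} ⊔ range φ
  have hXmem : ∀ n : ℕ,
      (X : ℂ[X]) ^ n ∈ Submodule.span ℂ {1, X ^ (N + 1)} ⊔ LinearMap.range φ := by
    intro n
    match n with
    | 0 =>
      exact Submodule.mem_sup_left (Submodule.subset_span (by simp))
    | Nat.succ m =>
      by_cases hm : m = N
      · subst hm
        exact Submodule.mem_sup_left (Submodule.subset_span (by simp))
      · have hcm : 1 - lam * q ^ m ≠ 0 := fun h' => hm ((hcz m).mp h')
        have h : (X : ℂ[X]) ^ (m + 1) = (1 - lam * q ^ m)⁻¹ • φ (X ^ m) := by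
          rw [hφ m, smul_smul, inv_mul_cancel₀ hcm, one_smul]
        rw [h]
        exact Submodule.mem_sup_right (Submodule.smul_mem _ _ (LinearMap.mem_range_self φ _))
  have htop : Submodule.span ℂ {(1 : ℂ[X]), X ^ (N + 1)} ⊔ LinearMap.range φ = ⊤ := by
    rw [eq_top_iff]
    intro p _
    induction p using Polynomial.induction_on' with
    | add p r hp hr => exact Submodule.add_mem _ (hp trivial) (hr trivial)
    | monomial n a =>
      rw [hmono]
      exact Submodule.smul_mem _ _ (hXmem n)
  -- quotient span
  have hspan : Submodule.span ℂ
      {(LinearMap.range φ).mkQ 1, (LinearMap.range φ).mkQ (X ^ (N + 1))} =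
      (⊤ : Submodule ℂ _) := by
    have hmap : Submodule.map (LinearMap.range φ).mkQ
        (Submodule.span ℂ {(1 : ℂ[X]), X ^ (N + 1)} ⊔ LinearMap.range φ) = ⊤ := by
      rw [htop, Submodule.map_top, Submodule.range_mkQ]
    rw [Submodule.map_sup, Submodule.map_span] at hmap
    have hbot : Submodule.map (LinearMap.range φ).mkQ (LinearMap.range φ) = ⊥ := by
      rw [eq_bot_iff]
      rintro x ⟨y, hy, rfl⟩
      simp only [Submodule.mem_bot, Submodule.mkQ_apply]
      rwa [Submodule.Quotient.mk_eq_zero]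
    rw [hbot, sup_bot_eq, Set.image_insert_eq, Set.image_singleton] at hmap
    exact hmap
  refine ⟨hker, hspan, ?_⟩
  rw [LinearIndependent.pair_iff]
  intro s t hst
  have hmem : s • (1 : ℂ[X]) + t • X ^ (N + 1) ∈ LinearMap.range φ := by
    rw [← Submodule.Quotient.mk_eq_zero (LinearMap.range φ)]
    have h : (LinearMap.range φ).mkQ (s • (1 : ℂ[X]) + t • X ^ (N + 1)) = 0 := by
      rw [map_add, map_smul, map_smul]
      exact hst
    exact h
  obtain ⟨h0, h1⟩ := hrange _ hmem
  simp only [coeff_add, coeff_smul, coeff_one, coeff_X_pow, smul_eq_mul,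
    if_neg (show ¬(0 : ℕ) = N + 1 by omega), if_neg (show ¬N + 1 = (0 : ℕ) by omega),
    if_pos rfl, if_true, mul_one, mul_zero, add_zero, zero_add] at h0 h1
  exact ⟨h0, h1⟩
end

section
/- In the quantum plane $A = \mathbb{C}\langle x,y \rangle / (yx - qxy)$ with $q$ not a root of unity, any algebra-like ribbon automorphism determined by $\sigma(x) = \lambda x$, $\sigma(y) = \lambda y$ and the ribbon relation satisfies $\sigma(x^m y^n) = \lambda^{m+n} q^{(m+n)(m+n-1)/2} x^m y^n$ for all $m, n \geq 0$. -/
/-! Write `A_d` for the span of the monomials of total degree `d`. The braiding is homogeneous: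
`Ψ` maps `A_i ⊗ A_j` into `A_j ⊗ A_i`, and `μ ∘ Ψ = s^{ij} μ` there. This holds in bidegree
`(1, 1)` by the explicit formulas, in bidegrees `(0, j)` and `(i, 0)` by the unit laws, and it
propagates to `(i, k + l)` and `(k + l, j)` through the two hexagon identities, since every
monomial of degree `k + l` is a product of monomials of degrees `k` and `l`.

If `σ` acts on `A_k` and `A_l` by scalars `α` and `β`, the ribbon relation and homogeneity give
`σ (a b) = μ (σ ⊗ σ) Ψ² (a ⊗ b) = α β s^{2kl} a b`; with `σ = λ` on `A_1` this recursion is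
solved by `λ^d s^{d(d-1)}` on `A_d`. -/

open TensorProduct

namespace QuantumPlane

section Monomials

variable {R A : Type*} [CommSemiring R] [Semiring A] [Algebra R A]

def monomials (x y : A) (d : ℕ) : Set A := {a | ∃ m n : ℕ, m + n = d ∧ a = x ^ m * y ^ n}

variable {x y : A}

lemma monomials_zero (x y : A) : monomials x y 0 = {1} := by
  ext a
  simp [monomials]

lemma one_mem_monomials_zero (x y : A) : (1 : A) ∈ monomials x y 0 := by
  simp [monomials_zero]

lemma monomials_one (x y : A) : monomials x y 1 = {x, y} := by
  ext a
  simp only [monomials, Nat.add_eq_one_iff, Set.mem_ofPred_eq, Set.mem_insert_iff,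
    Set.mem_singleton_iff]
  constructor
  · rintro ⟨m, n, (⟨rfl, rfl⟩ | ⟨rfl, rfl⟩), rfl⟩ <;> simp
  · rintro (rfl | rfl)
    exacts [⟨1, 0, by simp⟩, ⟨0, 1, by simp⟩]

lemma exists_mul_of_mem_monomials_add {k l : ℕ} {a : A} (ha : a ∈ monomials x y (k + l)) :
    ∃ b ∈ monomials x y k, ∃ c ∈ monomials x y l, a = b * c := by
  obtain ⟨m, n, hmn, rfl⟩ := ha
  rcases le_total k m with hkm | hmk
  · obtain ⟨m', rfl⟩ := Nat.exists_eq_add_of_le hkm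
    exact ⟨x ^ k * y ^ 0, ⟨k, 0, rfl, rfl⟩, x ^ m' * y ^ n, ⟨m', n, by omega, rfl⟩,
      by simp [pow_add, mul_assoc]⟩
  · obtain ⟨k', rfl⟩ := Nat.exists_eq_add_of_le hmk
    obtain ⟨n', rfl⟩ : ∃ n', n = k' + n' := ⟨n - k', by omega⟩
    exact ⟨x ^ m * y ^ k', ⟨m, k', rfl, rfl⟩, x ^ 0 * y ^ n', ⟨0, n', by omega, rfl⟩,
      by simp [pow_add, mul_assoc]⟩

variable {q : R}

lemma pow_mul_pow_eq_smul (hrel : y * x = q • (x * y)) (r u : ℕ) :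
    y ^ r * x ^ u = q ^ (r * u) • (x ^ u * y ^ r) := by
  have hy : ∀ u : ℕ, y * x ^ u = q ^ u • (x ^ u * y) := by
    intro u
    induction u with
    | zero => simp
    | succ u ih =>
      rw [pow_succ, ← mul_assoc, ih, smul_mul_assoc, mul_assoc, hrel, mul_smul_comm, smul_smul,
        ← mul_assoc, pow_succ]
  induction r with
  | zero => simp
  | succ r ih =>
    rw [pow_succ, mul_assoc, hy, mul_smul_comm, ← mul_assoc, ih, smul_mul_assoc, smul_smul,
      mul_assoc, ← pow_succ, ← pow_add, add_comm u, add_one_mul]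

lemma mul_mem_monomials (hrel : y * x = q • (x * y)) {i j : ℕ} {a b : A}
    (ha : a ∈ monomials x y i) (hb : b ∈ monomials x y j) :
    ∃ c : R, ∃ m ∈ monomials x y (i + j), a * b = c • m := by
  obtain ⟨p, r, rfl, rfl⟩ := ha
  obtain ⟨u, v, rfl, rfl⟩ := hb
  refine ⟨q ^ (r * u), x ^ (p + u) * y ^ (r + v), ⟨p + u, r + v, by omega, rfl⟩, ?_⟩
  calc x ^ p * y ^ r * (x ^ u * y ^ v) = x ^ p * (y ^ r * x ^ u) * y ^ v := by
        simp only [mul_assoc]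
    _ = q ^ (r * u) • (x ^ (p + u) * y ^ (r + v)) := by
        rw [pow_mul_pow_eq_smul hrel, mul_smul_comm, smul_mul_assoc]
        simp only [pow_add, mul_assoc]

end Monomials

section Bidegree

variable {R A : Type*} [CommSemiring R] [Semiring A] [Algebra R A] {x y : A}

variable (R) in
def bidegree (x y : A) (i j : ℕ) : Submodule R (A ⊗[R] A) :=
  Submodule.span R (Set.image2 (· ⊗ₜ ·) (monomials x y i) (monomials x y j))

variable {i j : ℕ}

lemma tmul_mem_bidegree {a b : A} (ha : a ∈ monomials x y i) (hb : b ∈ monomials x y j) :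
    a ⊗ₜ b ∈ bidegree R x y i j :=
  Submodule.subset_span (Set.mem_image2_of_mem ha hb)

lemma apply_mem_of_mem_bidegree {N : Type*} [AddCommMonoid N] [Module R N]
    {f : A ⊗[R] A →ₗ[R] N} {p : Submodule R N}
    (h : ∀ a ∈ monomials x y i, ∀ b ∈ monomials x y j, f (a ⊗ₜ b) ∈ p)
    {z : A ⊗[R] A} (hz : z ∈ bidegree R x y i j) : f z ∈ p := by
  refine (Submodule.map_span_le f _ p).2 ?_ (Submodule.mem_map_of_mem hz)
  rintro _ ⟨a, ha, b, hb, rfl⟩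
  exact h a ha b hb

lemma eqOn_bidegree {N : Type*} [AddCommMonoid N] [Module R N] {f g : A ⊗[R] A →ₗ[R] N}
    (h : ∀ a ∈ monomials x y i, ∀ b ∈ monomials x y j, f (a ⊗ₜ b) = g (a ⊗ₜ b)) :
    Set.EqOn f g (bidegree R x y i j) :=
  LinearMap.eqOn_span' (by rintro _ ⟨a, ha, b, hb, rfl⟩; exact h a ha b hb)

variable {q : R}

lemma tmul_one_mul_mem_bidegree (hrel : y * x = q • (x * y)) {k : ℕ} {u : A}
    (hu : u ∈ monomials x y k) {z : A ⊗[R] A} (hz : z ∈ bidegree R x y i j) :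
    (u ⊗ₜ 1) * z ∈ bidegree R x y (k + i) j := by
  refine apply_mem_of_mem_bidegree (f := LinearMap.mulLeft R (u ⊗ₜ[R] (1 : A))) ?_ hz
  intro a ha b hb
  obtain ⟨c, m, hm, hum⟩ := mul_mem_monomials hrel hu ha
  rw [LinearMap.mulLeft_apply, Algebra.TensorProduct.tmul_mul_tmul, one_mul, hum,
    ← smul_tmul']
  exact Submodule.smul_mem _ c (tmul_mem_bidegree hm hb)

lemma mul_one_tmul_mem_bidegree (hrel : y * x = q • (x * y)) {k : ℕ} {v : A}
    (hv : v ∈ monomials x y k) {z : A ⊗[R] A} (hz : z ∈ bidegree R x y i j) :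
    z * (1 ⊗ₜ v) ∈ bidegree R x y i (j + k) := by
  refine apply_mem_of_mem_bidegree (f := LinearMap.mulRight R ((1 : A) ⊗ₜ[R] v)) ?_ hz
  intro a ha b hb
  obtain ⟨c, m, hm, hbv⟩ := mul_mem_monomials hrel hb hv
  rw [LinearMap.mulRight_apply, Algebra.TensorProduct.tmul_mul_tmul, mul_one, hbv, tmul_smul]
  exact Submodule.smul_mem _ c (tmul_mem_bidegree ha hm)

end Bidegree

section Multiplication

variable {R A : Type*} [CommSemiring R] [Semiring A] [Algebra R A]

lemma mul'_tmul_one_mul (u : A) (z : A ⊗[R] A) :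
    LinearMap.mul' R A ((u ⊗ₜ 1) * z) = u * LinearMap.mul' R A z := by
  induction z using TensorProduct.induction_on with
  | zero => simp
  | tmul a b => simp [mul_assoc]
  | add z w hz hw => simp [mul_add, hz, hw]

lemma mul'_mul_one_tmul (v : A) (z : A ⊗[R] A) :
    LinearMap.mul' R A (z * (1 ⊗ₜ v)) = LinearMap.mul' R A z * v := by
  induction z using TensorProduct.induction_on with
  | zero => simp
  | tmul a b => simp [mul_assoc]
  | add z w hz hw => simp [add_mul, hz, hw]

end Multiplication

section Braiding

variable {R A : Type*} [CommSemiring R] [Semiring A] [Algebra R A]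
  (Ψ : A ⊗[R] A →ₗ[R] A ⊗[R] A)

def hexRight (c : A) : A ⊗[R] A →ₗ[R] A ⊗[R] A :=
  LinearMap.rTensor A (LinearMap.mul' R A) ∘ₗ (TensorProduct.assoc R A A A).symm.toLinearMap ∘ₗ
    LinearMap.lTensor A Ψ ∘ₗ (TensorProduct.assoc R A A A).toLinearMap ∘ₗ
    (TensorProduct.mk R (A ⊗[R] A) A).flip c

def hexLeft (a : A) : A ⊗[R] A →ₗ[R] A ⊗[R] A :=
  LinearMap.lTensor A (LinearMap.mul' R A) ∘ₗ (TensorProduct.assoc R A A A).toLinearMap ∘ₗ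
    LinearMap.rTensor A Ψ ∘ₗ (TensorProduct.assoc R A A A).symm.toLinearMap ∘ₗ
    TensorProduct.mk R A (A ⊗[R] A) a

lemma hexRight_tmul (c u v : A) : hexRight Ψ c (u ⊗ₜ v) = (u ⊗ₜ 1) * Ψ (v ⊗ₜ c) := by
  simp only [hexRight, LinearMap.comp_apply, LinearMap.flip_apply, TensorProduct.mk_apply,
    LinearEquiv.coe_coe, TensorProduct.assoc_tmul, LinearMap.lTensor_tmul]
  induction Ψ (v ⊗ₜ c) using TensorProduct.induction_on with
  | zero => simp
  | tmul a b => simp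
  | add z w hz hw => simp [tmul_add, mul_add, hz, hw]

lemma hexLeft_tmul (a u v : A) : hexLeft Ψ a (u ⊗ₜ v) = Ψ (a ⊗ₜ u) * (1 ⊗ₜ v) := by
  simp only [hexLeft, LinearMap.comp_apply, TensorProduct.mk_apply, LinearEquiv.coe_coe,
    TensorProduct.assoc_symm_tmul, LinearMap.rTensor_tmul]
  induction Ψ (a ⊗ₜ u) using TensorProduct.induction_on with
  | zero => simp
  | tmul b c => simp
  | add z w hz hw => simp [add_tmul, add_mul, hz, hw]

lemma map_tmul_mul_eq_hexRight
    (hhex : Ψ ∘ₗ LinearMap.lTensor A (LinearMap.mul' R A) =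
      (LinearMap.rTensor A (LinearMap.mul' R A) ∘ₗ
        (TensorProduct.assoc R A A A).symm.toLinearMap) ∘ₗ
        LinearMap.lTensor A Ψ ∘ₗ
        ((TensorProduct.assoc R A A A).toLinearMap ∘ₗ
          LinearMap.rTensor A Ψ ∘ₗ (TensorProduct.assoc R A A A).symm.toLinearMap))
    (a b c : A) : Ψ (a ⊗ₜ (b * c)) = hexRight Ψ c (Ψ (a ⊗ₜ b)) := by
  simpa [hexRight] using LinearMap.congr_fun hhex (a ⊗ₜ (b ⊗ₜ c))

lemma map_mul_tmul_eq_hexLeft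
    (hhex : Ψ ∘ₗ (LinearMap.rTensor A (LinearMap.mul' R A) ∘ₗ
        (TensorProduct.assoc R A A A).symm.toLinearMap) =
      LinearMap.lTensor A (LinearMap.mul' R A) ∘ₗ
        ((TensorProduct.assoc R A A A).toLinearMap ∘ₗ
          LinearMap.rTensor A Ψ ∘ₗ (TensorProduct.assoc R A A A).symm.toLinearMap) ∘ₗ
        LinearMap.lTensor A Ψ)
    (a b c : A) : Ψ ((a * b) ⊗ₜ c) = hexLeft Ψ a (Ψ (b ⊗ₜ c)) := by
  simpa [hexLeft] using LinearMap.congr_fun hhex (a ⊗ₜ (b ⊗ₜ c))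

def BraidsBidegree (s : R) (x y : A) (i j : ℕ) : Prop :=
  ∀ a ∈ monomials x y i, ∀ b ∈ monomials x y j,
    Ψ (a ⊗ₜ b) ∈ bidegree R x y j i ∧ LinearMap.mul' R A (Ψ (a ⊗ₜ b)) = s ^ (i * j) • (a * b)

variable {Ψ} {s q : R} {x y : A} {i j k l : ℕ}

namespace BraidsBidegree

lemma map_mem (h : BraidsBidegree Ψ s x y i j) {z : A ⊗[R] A} (hz : z ∈ bidegree R x y i j) :
    Ψ z ∈ bidegree R x y j i :=
  apply_mem_of_mem_bidegree (fun a ha b hb ↦ (h a ha b hb).1) hz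

lemma mul'_map (h : BraidsBidegree Ψ s x y i j) {z : A ⊗[R] A}
    (hz : z ∈ bidegree R x y i j) :
    LinearMap.mul' R A (Ψ z) = s ^ (i * j) • LinearMap.mul' R A z :=
  eqOn_bidegree (f := LinearMap.mul' R A ∘ₗ Ψ) (g := s ^ (i * j) • LinearMap.mul' R A)
    (fun a ha b hb ↦ by simpa using (h a ha b hb).2) hz

lemma add_right (hrel : y * x = q • (x * y))
    (hhex : ∀ a b c : A, Ψ (a ⊗ₜ (b * c)) = hexRight Ψ c (Ψ (a ⊗ₜ b)))
    (hk : BraidsBidegree Ψ s x y i k) (hl : BraidsBidegree Ψ s x y i l) :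
    BraidsBidegree Ψ s x y i (k + l) := by
  intro a ha bc hbc
  obtain ⟨b, hb, c, hc, rfl⟩ := exists_mul_of_mem_monomials_add hbc
  obtain ⟨hab_mem, hab_mul⟩ := hk a ha b hb
  have hmul : Set.EqOn (LinearMap.mul' R A ∘ₗ hexRight Ψ c)
      ⇑(s ^ (i * l) • (LinearMap.mulRight R c ∘ₗ LinearMap.mul' R A)) (bidegree R x y k i) :=
    eqOn_bidegree fun u _ v hv ↦ by
      simp [hexRight_tmul, mul'_tmul_one_mul, (hl v hv c hc).2, mul_assoc]
  rw [hhex]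
  refine ⟨apply_mem_of_mem_bidegree (fun u hu v hv ↦ ?_) hab_mem, ?_⟩
  · rw [hexRight_tmul]
    exact tmul_one_mul_mem_bidegree hrel hu (hl v hv c hc).1
  · have := hmul hab_mem
    simp only [LinearMap.comp_apply, LinearMap.smul_apply, LinearMap.mulRight_apply] at this
    rw [this, hab_mul, smul_mul_assoc, smul_smul, ← pow_add, mul_add, mul_assoc, add_comm]

lemma add_left (hrel : y * x = q • (x * y))
    (hhex : ∀ a b c : A, Ψ ((a * b) ⊗ₜ c) = hexLeft Ψ a (Ψ (b ⊗ₜ c)))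
    (hk : BraidsBidegree Ψ s x y k j) (hl : BraidsBidegree Ψ s x y l j) :
    BraidsBidegree Ψ s x y (k + l) j := by
  intro ab hab c hc
  obtain ⟨a, ha, b, hb, rfl⟩ := exists_mul_of_mem_monomials_add hab
  obtain ⟨hbc_mem, hbc_mul⟩ := hl b hb c hc
  have hmul : Set.EqOn (LinearMap.mul' R A ∘ₗ hexLeft Ψ a)
      ⇑(s ^ (k * j) • (LinearMap.mulLeft R a ∘ₗ LinearMap.mul' R A)) (bidegree R x y j l) :=
    eqOn_bidegree fun u hu v _ ↦ by
      simp [hexLeft_tmul, mul'_mul_one_tmul, (hk a ha u hu).2, mul_assoc]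
  rw [hhex]
  refine ⟨apply_mem_of_mem_bidegree (fun u hu v hv ↦ ?_) hbc_mem, ?_⟩
  · rw [hexLeft_tmul]
    exact mul_one_tmul_mem_bidegree hrel hv (hk a ha u hu).1
  · have := hmul hbc_mem
    simp only [LinearMap.comp_apply, LinearMap.smul_apply, LinearMap.mulLeft_apply] at this
    rw [this, hbc_mul, mul_smul_comm, smul_smul, ← pow_add, add_mul, mul_assoc]

end BraidsBidegree

lemma braidsBidegree_zero_left (hunit : ∀ a : A, Ψ (1 ⊗ₜ a) = a ⊗ₜ 1) :
    BraidsBidegree Ψ s x y 0 j := by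
  intro a ha b hb
  rw [monomials_zero, Set.mem_singleton_iff] at ha
  subst ha
  exact ⟨by simpa [hunit] using tmul_mem_bidegree hb (one_mem_monomials_zero x y),
    by simp [hunit]⟩

lemma braidsBidegree_zero_right (hunit : ∀ a : A, Ψ (a ⊗ₜ 1) = 1 ⊗ₜ a) :
    BraidsBidegree Ψ s x y i 0 := by
  intro a ha b hb
  rw [monomials_zero, Set.mem_singleton_iff] at hb
  subst hb
  exact ⟨by simpa [hunit] using tmul_mem_bidegree (one_mem_monomials_zero x y) ha,
    by simp [hunit]⟩

lemma braidsBidegree_of_one_one (hrel : y * x = q • (x * y))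
    (hunitl : ∀ a : A, Ψ (1 ⊗ₜ a) = a ⊗ₜ 1) (hunitr : ∀ a : A, Ψ (a ⊗ₜ 1) = 1 ⊗ₜ a)
    (hhexl : ∀ a b c : A, Ψ ((a * b) ⊗ₜ c) = hexLeft Ψ a (Ψ (b ⊗ₜ c)))
    (hhexr : ∀ a b c : A, Ψ (a ⊗ₜ (b * c)) = hexRight Ψ c (Ψ (a ⊗ₜ b)))
    (h11 : BraidsBidegree Ψ s x y 1 1) (i j : ℕ) : BraidsBidegree Ψ s x y i j := by
  have h1 : ∀ j, BraidsBidegree Ψ s x y 1 j := by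
    intro j
    induction j with
    | zero => exact braidsBidegree_zero_right hunitr
    | succ j ih => exact ih.add_right hrel hhexr h11
  induction i with
  | zero => exact braidsBidegree_zero_left hunitl
  | succ i ih => exact ih.add_left hrel hhexl (h1 j)

end Braiding

lemma braidsBidegree_one_one {K A : Type*} [Field K] [Semiring A] [Algebra K A] {x y : A}
    {q s : K} {Ψ : A ⊗[K] A →ₗ[K] A ⊗[K] A} (hrel : y * x = q • (x * y)) (hs : s ^ 2 = q)
    (hxx : Ψ (x ⊗ₜ x) = s • (x ⊗ₜ x))
    (hxy : Ψ (x ⊗ₜ y) = s⁻¹ • (y ⊗ₜ x))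
    (hyx : Ψ (y ⊗ₜ x) = s⁻¹ • (x ⊗ₜ y) + (s⁻¹ * (q - q⁻¹)) • (y ⊗ₜ x))
    (hyy : Ψ (y ⊗ₜ y) = s • (y ⊗ₜ y)) :
    BraidsBidegree Ψ s x y 1 1 := by
  have hx : x ∈ monomials x y 1 := by simp [monomials_one]
  have hy : y ∈ monomials x y 1 := by simp [monomials_one]
  subst hs
  have hcoef₁ : s⁻¹ * s ^ 2 = s := by rw [sq, ← mul_assoc, inv_mul_mul_self]
  have hcoef₂ : s⁻¹ + s⁻¹ * (s ^ 2 - (s ^ 2)⁻¹) * s ^ 2 = s * s ^ 2 := by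
    rcases eq_or_ne s 0 with rfl | hs0
    · simp
    · field_simp
      ring
  simp only [BraidsBidegree, monomials_one, Set.forall_mem_insert, Set.mem_singleton_iff,
    forall_eq, mul_one, pow_one]
  refine ⟨⟨⟨?_, by simp [hxx]⟩, ?_, ?_⟩, ⟨?_, ?_⟩, ?_, by simp [hyy]⟩
  · simpa [hxx] using Submodule.smul_mem _ s (tmul_mem_bidegree hx hx)
  · simpa [hxy] using Submodule.smul_mem _ s⁻¹ (tmul_mem_bidegree hy hx)
  · simp [hxy, hrel, smul_smul, hcoef₁]
  · rw [hyx]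
    exact add_mem (Submodule.smul_mem _ _ (tmul_mem_bidegree hx hy))
      (Submodule.smul_mem _ _ (tmul_mem_bidegree hy hx))
  · simp [hyx, hrel, smul_smul, ← add_smul, hcoef₂]
  · simpa [hyy] using Submodule.smul_mem _ s (tmul_mem_bidegree hy hy)

section Ribbon

variable {R A : Type*} [CommSemiring R] [Semiring A] [Algebra R A]
  {Ψ : A ⊗[R] A →ₗ[R] A ⊗[R] A} {σ : A →ₗ[R] A} {s α β : R} {x y : A} {k l : ℕ}

lemma apply_eq_smul_of_mem_monomials_add (hB : ∀ i j, BraidsBidegree Ψ s x y i j)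
    (hribbon : σ ∘ₗ LinearMap.mul' R A =
      LinearMap.mul' R A ∘ₗ TensorProduct.map σ σ ∘ₗ Ψ ∘ₗ Ψ)
    (hk : ∀ a ∈ monomials x y k, σ a = α • a) (hl : ∀ b ∈ monomials x y l, σ b = β • b)
    {a : A} (ha : a ∈ monomials x y (k + l)) : σ a = (α * β * s ^ (2 * (k * l))) • a := by
  obtain ⟨b, hb, c, hc, rfl⟩ := exists_mul_of_mem_monomials_add ha
  obtain ⟨hΨ_mem, hΨ_mul⟩ := hB k l b hb c hc
  have hσσ : Set.EqOn (LinearMap.mul' R A ∘ₗ TensorProduct.map σ σ)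
      ⇑((α * β) • LinearMap.mul' R A) (bidegree R x y k l) :=
    eqOn_bidegree fun u hu v hv ↦ by simp [hk u hu, hl v hv, smul_smul, mul_comm β]
  calc σ (b * c) = LinearMap.mul' R A (TensorProduct.map σ σ (Ψ (Ψ (b ⊗ₜ c)))) := by
        simpa using LinearMap.congr_fun hribbon (b ⊗ₜ c)
    _ = (α * β) • LinearMap.mul' R A (Ψ (Ψ (b ⊗ₜ c))) := hσσ ((hB l k).map_mem hΨ_mem)
    _ = (α * β) • s ^ (l * k) • s ^ (k * l) • (b * c) := by
        rw [(hB l k).mul'_map hΨ_mem, hΨ_mul]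
    _ = (α * β * s ^ (2 * (k * l))) • (b * c) := by
        rw [smul_smul, smul_smul, mul_assoc, ← pow_add, mul_comm l k, ← two_mul]

end Ribbon

end QuantumPlane

open QuantumPlane

theorem stmt7_general {A : Type*} [Ring A] [Algebra ℂ A] (q s lam : ℂ)
    (hs : s ^ 2 = q)
    (x y : A) (hrel : y * x = q • (x * y))
    (Ψ : A ⊗[ℂ] A →ₗ[ℂ] A ⊗[ℂ] A)
    -- values of the braiding on the generators
    (hxx : Ψ (x ⊗ₜ x) = s • (x ⊗ₜ x))
    (hxy : Ψ (x ⊗ₜ y) = s⁻¹ • (y ⊗ₜ x))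
    (hyx : Ψ (y ⊗ₜ x) = s⁻¹ • (x ⊗ₜ y) + (s⁻¹ * (q - q⁻¹)) • (y ⊗ₜ x))
    (hyy : Ψ (y ⊗ₜ y) = s • (y ⊗ₜ y))
    -- unit laws for the braiding
    (hunitl : ∀ a : A, Ψ ((1 : A) ⊗ₜ a) = a ⊗ₜ (1 : A))
    (hunitr : ∀ a : A, Ψ (a ⊗ₜ (1 : A)) = (1 : A) ⊗ₜ a)
    -- hexagon identities: compatibility of `Ψ` with the multiplication
    (hhex1 : Ψ ∘ₗ (LinearMap.rTensor A (LinearMap.mul' ℂ A) ∘ₗ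
        (TensorProduct.assoc ℂ A A A).symm.toLinearMap) =
      LinearMap.lTensor A (LinearMap.mul' ℂ A) ∘ₗ
        ((TensorProduct.assoc ℂ A A A).toLinearMap ∘ₗ
          LinearMap.rTensor A Ψ ∘ₗ (TensorProduct.assoc ℂ A A A).symm.toLinearMap) ∘ₗ
        LinearMap.lTensor A Ψ)
    (hhex2 : Ψ ∘ₗ LinearMap.lTensor A (LinearMap.mul' ℂ A) =
      (LinearMap.rTensor A (LinearMap.mul' ℂ A) ∘ₗ
        (TensorProduct.assoc ℂ A A A).symm.toLinearMap) ∘ₗ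
        LinearMap.lTensor A Ψ ∘ₗ
        ((TensorProduct.assoc ℂ A A A).toLinearMap ∘ₗ
          LinearMap.rTensor A Ψ ∘ₗ (TensorProduct.assoc ℂ A A A).symm.toLinearMap))
    (σ : A →ₗ[ℂ] A)
    (hσ1 : σ 1 = 1) (hσx : σ x = lam • x) (hσy : σ y = lam • y)
    -- the ribbon relation `σ ∘ μ = μ ∘ (σ ⊗ σ) ∘ Ψ²`
    (hribbon : σ ∘ₗ LinearMap.mul' ℂ A =
      LinearMap.mul' ℂ A ∘ₗ TensorProduct.map σ σ ∘ₗ Ψ ∘ₗ Ψ) :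
    ∀ m n : ℕ, σ (x ^ m * y ^ n) =
      (lam ^ (m + n) * s ^ ((m + n) * (m + n - 1))) • (x ^ m * y ^ n) := by
  have hB : ∀ i j, BraidsBidegree Ψ s x y i j :=
    braidsBidegree_of_one_one hrel hunitl hunitr (map_mul_tmul_eq_hexLeft Ψ hhex1)
      (map_tmul_mul_eq_hexRight Ψ hhex2) (braidsBidegree_one_one hrel hs hxx hxy hyx hyy)
  have hσ_one : ∀ a ∈ monomials x y 1, σ a = lam • a := by simp [monomials_one, hσx, hσy]
  have hσ_deg : ∀ d, ∀ a ∈ monomials x y d, σ a = (lam ^ d * s ^ (d * (d - 1))) • a := by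
    intro d
    induction d with
    | zero => simp [monomials_zero, hσ1]
    | succ d ih =>
      intro a ha
      have hexp : d * (d - 1) + 2 * (d * 1) = (d + 1) * (d + 1 - 1) := by
        cases d <;> simp only [Nat.add_sub_cancel]
        ring
      rw [apply_eq_smul_of_mem_monomials_add hB hribbon ih hσ_one ha, ← hexp, pow_add, pow_succ]
      congr 1
      ring
  exact fun m n ↦ hσ_deg (m + n) _ ⟨m, n, rfl, rfl⟩

/-- In the quantum plane `A = ℂ⟨x,y⟩/(yx - qxy)` (`q` not a root of
unity, `s = q^{1/2}`), any ribbon automorphism `σ` with `σ(x) = λ x`, `σ(y) = λ y`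
(satisfying the ribbon relation `σ ∘ μ = μ ∘ (σ ⊗ σ) ∘ Ψ²` for the braiding `Ψ` induced
from `ℂ_q[SL(2)]`) satisfies `σ(x^m y^n) = λ^{m+n} q^{(m+n)(m+n-1)/2} x^m y^n`.
The braiding `Ψ` is specified by its values on the generators, the unit laws, and the
two hexagon identities expressing compatibility with multiplication. -/
theorem stmt7 {A : Type*} [Ring A] [Algebra ℂ A] (q s lam : ℂ)
    (hq : q ≠ 0) (hroot : ∀ n : ℕ, n ≠ 0 → q ^ n ≠ 1) (hs : s ^ 2 = q) (hs0 : s ≠ 0)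
    (hlam : lam ≠ 0)
    (x y : A) (hrel : y * x = q • (x * y))
    (Bas : Module.Basis (ℕ × ℕ) ℂ A) (hBas : ∀ m n : ℕ, Bas (m, n) = x ^ m * y ^ n)
    (Ψ : A ⊗[ℂ] A →ₗ[ℂ] A ⊗[ℂ] A)
    -- values of the braiding on the generators
    (hxx : Ψ (x ⊗ₜ x) = s • (x ⊗ₜ x))
    (hxy : Ψ (x ⊗ₜ y) = s⁻¹ • (y ⊗ₜ x))
    (hyx : Ψ (y ⊗ₜ x) = s⁻¹ • (x ⊗ₜ y) + (s⁻¹ * (q - q⁻¹)) • (y ⊗ₜ x))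
    (hyy : Ψ (y ⊗ₜ y) = s • (y ⊗ₜ y))
    -- unit laws for the braiding
    (hunitl : ∀ a : A, Ψ ((1 : A) ⊗ₜ a) = a ⊗ₜ (1 : A))
    (hunitr : ∀ a : A, Ψ (a ⊗ₜ (1 : A)) = (1 : A) ⊗ₜ a)
    -- hexagon identities: compatibility of `Ψ` with the multiplication
    (hhex1 : Ψ ∘ₗ (LinearMap.rTensor A (LinearMap.mul' ℂ A) ∘ₗ
        (TensorProduct.assoc ℂ A A A).symm.toLinearMap) =
      LinearMap.lTensor A (LinearMap.mul' ℂ A) ∘ₗ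
        ((TensorProduct.assoc ℂ A A A).toLinearMap ∘ₗ
          LinearMap.rTensor A Ψ ∘ₗ (TensorProduct.assoc ℂ A A A).symm.toLinearMap) ∘ₗ
        LinearMap.lTensor A Ψ)
    (hhex2 : Ψ ∘ₗ LinearMap.lTensor A (LinearMap.mul' ℂ A) =
      (LinearMap.rTensor A (LinearMap.mul' ℂ A) ∘ₗ
        (TensorProduct.assoc ℂ A A A).symm.toLinearMap) ∘ₗ
        LinearMap.lTensor A Ψ ∘ₗ
        ((TensorProduct.assoc ℂ A A A).toLinearMap ∘ₗ
          LinearMap.rTensor A Ψ ∘ₗ (TensorProduct.assoc ℂ A A A).symm.toLinearMap))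
    (σ : A →ₗ[ℂ] A) (hbij : Function.Bijective σ)
    (hσ1 : σ 1 = 1) (hσx : σ x = lam • x) (hσy : σ y = lam • y)
    -- the ribbon relation `σ ∘ μ = μ ∘ (σ ⊗ σ) ∘ Ψ²`
    (hribbon : σ ∘ₗ LinearMap.mul' ℂ A =
      LinearMap.mul' ℂ A ∘ₗ TensorProduct.map σ σ ∘ₗ Ψ ∘ₗ Ψ) :
    ∀ m n : ℕ, σ (x ^ m * y ^ n) =
      (lam ^ (m + n) * s ^ ((m + n) * (m + n - 1))) • (x ^ m * y ^ n) :=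
  stmt7_general q s lam hs x y hrel Ψ hxx hxy hyx hyy hunitl hunitr hhex1 hhex2 σ hσ1 hσx hσy
    hribbon
end

section
/- Let $q \in \mathbb{C}^\times$ not a root of unity and $\lambda \in \mathbb{C}^\times$ with $\lambda \notin \{q^{-n/2} : n \in \mathbb{N}\}$. Consider the quantum plane $A = \mathbb{C}\langle x,y\rangle/(yx-qxy)$ with right action on $R(A) = A$ given by $x^m y^n \blacktriangleleft x = q^n(1 - \lambda q^{(m+n)/2}) x^{m+1} y^n$ and $x^m y^n \blacktriangleleft y = (1 - \lambda q^{(m+n)/2}) x^m y^{n+1}$. Then the complex $0 \to A \xrightarrow{g_2} A \oplus A \xrightarrow{g_1} A \to 0$, with $g_2(a) = (a \blacktriangleleft y, -q\, a \blacktriangleleft x)$ and $g_1(a,b) = a \blacktriangleleft x + b \blacktriangleleft y$, has $\ker g_2 = 0$, $\ker g_1 = \mathrm{im}\, g_2$, and $A/\mathrm{im}\, g_1 \cong \mathbb{C}$ spanned by the class of $1$. -/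
/-!
In the monomial basis `x^m y^n`, right multiplication by `x` and by `y` act as weighted shifts
`(m, n) ↦ (m + 1, n)` and `(m, n) ↦ (m, n + 1)` whose weights `q^n (1 - λ q^{(m+n)/2})` and
`1 - λ q^{(m+n)/2}` never vanish, and the two shifts commute up to the factor `q`.
Hence the complex is a Koszul complex of two commuting injective shifts: `g₂` is injective
because `◁ y` is, `ker g₁ = im g₂` because an element whose `◁ x`-image is divisible by `y` is
itself divisible by `y`, and `im g₁` is spanned by all monomials except `1`.
-/

open Module Submodule

section WeightedShift

variable {ι R M : Type*} [CommSemiring R] [AddCommMonoid M] [Module R M]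

def IsWeightedShift (b : Basis ι R M) (e : ι → ι) (w : ι → R) (f : M →ₗ[R] M) : Prop :=
  ∀ i, f (b i) = w i • b (e i)

namespace IsWeightedShift

variable {b : Basis ι R M} {e : ι → ι} {w : ι → R} {f : M →ₗ[R] M}

theorem repr_apply_shift (hf : IsWeightedShift b e w f) (he : e.Injective) (a : M) (i : ι) :
    b.repr (f a) (e i) = w i * b.repr a i := by
  have key : Finsupp.lapply (e i) ∘ₗ b.repr.toLinearMap ∘ₗ f =
      w i • (Finsupp.lapply i ∘ₗ b.repr.toLinearMap) := b.ext fun j => by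
    by_cases hji : j = i
    · subst hji; simp [hf j]
    · simp [hf j, he.eq_iff, hji]
  exact LinearMap.congr_fun key a

theorem injective (hf : IsWeightedShift b e w f) (he : e.Injective) (hw : ∀ i, IsUnit (w i)) :
    Function.Injective f := fun a a' h => b.ext_elem fun i =>
  (hw i).mul_left_cancel <| by rw [← hf.repr_apply_shift he, ← hf.repr_apply_shift he, h]

theorem range_eq_span (hf : IsWeightedShift b e w f) (hw : ∀ i, IsUnit (w i)) :
    LinearMap.range f = span R (b '' Set.range e) := by
  apply le_antisymm
  · rw [LinearMap.range_eq_map, ← b.span_eq, map_span, span_le]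
    rintro _ ⟨_, ⟨i, rfl⟩, rfl⟩
    rw [hf i]
    exact smul_mem _ _ (subset_span ⟨e i, ⟨i, rfl⟩, rfl⟩)
  · rw [span_le]
    rintro _ ⟨_, ⟨i, rfl⟩, rfl⟩
    refine ⟨(↑(hw i).unit⁻¹ : R) • b i, ?_⟩
    rw [map_smul, hf i, smul_smul, IsUnit.val_inv_mul, one_smul]

end IsWeightedShift

end WeightedShift

section Koszul

variable {R M : Type*} [CommRing R] [AddCommGroup M] [Module R M] {X Y : M →ₗ[R] M} (c : R)

theorem ker_prod_neg_smul_eq_bot (hY : Function.Injective Y) :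
    LinearMap.ker (Y.prod (-(c • X))) = ⊥ :=
  LinearMap.ker_eq_bot.2 fun _ _ h => hY (congrArg Prod.fst h)

theorem ker_coprod_eq_range_prod (hY : Function.Injective Y)
    (hcomm : X ∘ₗ Y = c • (Y ∘ₗ X))
    (hdiv : ∀ a, X a ∈ LinearMap.range Y → a ∈ LinearMap.range Y) :
    LinearMap.ker (X ∘ₗ LinearMap.fst R M M + Y ∘ₗ LinearMap.snd R M M) =
      LinearMap.range (Y.prod (-(c • X))) := by
  have hcomm' (w : M) : X (Y w) = c • Y (X w) := LinearMap.congr_fun hcomm w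
  apply le_antisymm
  · rintro ⟨a, a'⟩ h
    have hXa : X a = Y (-a') := by
      rw [map_neg]; exact eq_neg_of_add_eq_zero_left h
    obtain ⟨w, rfl⟩ := hdiv a ⟨_, hXa.symm⟩
    refine ⟨w, Prod.ext rfl (hY ?_)⟩
    simp [← hcomm', hXa]
  · rintro _ ⟨w, rfl⟩
    simp [hcomm']

end Koszul

section BasisQuotient

variable {ι R M : Type*} [CommRing R] [AddCommGroup M] [Module R M]

theorem Module.Basis.mkQ_ne_zero_of_span_compl [Nontrivial R] (b : Basis ι R M) (i : ι) :
    (span R (b '' {i}ᶜ)).mkQ (b i) ≠ 0 := by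
  rw [mkQ_apply, ne_eq, Quotient.mk_eq_zero]
  exact b.linearIndependent.notMem_span_image (Set.notMem_compl_iff.2 rfl)

theorem Module.Basis.span_mkQ_of_span_compl (b : Basis ι R M) (i : ι) :
    span R {(span R (b '' {i}ᶜ)).mkQ (b i)} = ⊤ := by
  rw [← Set.image_singleton, ← map_span, map_mkQ_eq_top, ← Set.image_singleton (f := b),
    ← span_union, ← Set.image_union, Set.compl_union_self, Set.image_univ, b.span_eq]

end BasisQuotient

section PlaneShifts

variable {R M : Type*} [CommRing R] [AddCommGroup M] [Module R M] {b : Basis (ℕ × ℕ) R M}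
  {X Y : M →ₗ[R] M} {α β : ℕ × ℕ → R}

theorem mem_range_of_apply_mem_range (hX : IsWeightedShift b (fun p => (p.1 + 1, p.2)) α X)
    (hY : IsWeightedShift b (fun p => (p.1, p.2 + 1)) β Y) (hα : ∀ p, IsUnit (α p))
    (hβ : ∀ p, IsUnit (β p)) {a : M} (ha : X a ∈ LinearMap.range Y) :
    a ∈ LinearMap.range Y := by
  rw [hY.range_eq_span hβ, b.mem_span_image] at ha ⊢
  rintro ⟨m, n⟩ hmn
  rcases n with _ | n
  · have hXa : b.repr (X a) (m + 1, 0) = 0 :=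
      Finsupp.notMem_support_iff.1 fun h => by obtain ⟨_, h⟩ := ha h; simp at h
    rw [hX.repr_apply_shift (Prod.map_injective.2 ⟨add_left_injective 1, Function.injective_id⟩)
      a (m, 0), (hα (m, 0)).mul_right_eq_zero] at hXa
    exact absurd hXa (Finsupp.mem_support_iff.1 hmn)
  · exact ⟨(m, n), rfl⟩

theorem range_coprod_eq_span (hX : IsWeightedShift b (fun p => (p.1 + 1, p.2)) α X)
    (hY : IsWeightedShift b (fun p => (p.1, p.2 + 1)) β Y) (hα : ∀ p, IsUnit (α p))
    (hβ : ∀ p, IsUnit (β p)) :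
    LinearMap.range (X ∘ₗ LinearMap.fst R M M + Y ∘ₗ LinearMap.snd R M M) =
      span R (b '' {(0, 0)}ᶜ) := by
  have hcover : Set.range (fun p : ℕ × ℕ => (p.1 + 1, p.2)) ∪
      Set.range (fun p : ℕ × ℕ => (p.1, p.2 + 1)) = {(0, 0)}ᶜ := by
    ext ⟨m, n⟩
    rcases m with _ | m <;> rcases n with _ | n <;> simp
  rw [← LinearMap.coprod, LinearMap.range_coprod, hX.range_eq_span hα, hY.range_eq_span hβ,
    ← span_union, ← Set.image_union, hcover]

end PlaneShifts

theorem stmt8_general {A : Type*} [Ring A] [Algebra ℂ A] (q s lam : ℂ)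
    (hq : q ≠ 0) (hlam' : ∀ n : ℕ, lam ≠ (s ^ n)⁻¹)
    (x y : A)
    (Bas : Module.Basis (ℕ × ℕ) ℂ A) (hBas : ∀ m n : ℕ, Bas (m, n) = x ^ m * y ^ n)
    (Rx Ry : A →ₗ[ℂ] A)
    (hRx : ∀ m n : ℕ, Rx (x ^ m * y ^ n) =
      (q ^ n * (1 - lam * s ^ (m + n))) • (x ^ (m + 1) * y ^ n))
    (hRy : ∀ m n : ℕ, Ry (x ^ m * y ^ n) =
      (1 - lam * s ^ (m + n)) • (x ^ m * y ^ (n + 1))) :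
    LinearMap.ker (LinearMap.prod Ry (-(q • Rx))) = ⊥ ∧
    LinearMap.ker (Rx ∘ₗ LinearMap.fst ℂ A A + Ry ∘ₗ LinearMap.snd ℂ A A) =
      LinearMap.range (LinearMap.prod Ry (-(q • Rx))) ∧
    Submodule.span ℂ
        {(LinearMap.range (Rx ∘ₗ LinearMap.fst ℂ A A + Ry ∘ₗ LinearMap.snd ℂ A A)).mkQ 1} =
      (⊤ : Submodule ℂ _) ∧
    (LinearMap.range (Rx ∘ₗ LinearMap.fst ℂ A A + Ry ∘ₗ LinearMap.snd ℂ A A)).mkQ 1 ≠ 0 := by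
  have hβ (p : ℕ × ℕ) : IsUnit (1 - lam * s ^ (p.1 + p.2)) :=
    isUnit_iff_ne_zero.2 <| sub_ne_zero.2 fun h =>
      hlam' _ (eq_inv_of_mul_eq_one_left h.symm)
  have hα (p : ℕ × ℕ) : IsUnit (q ^ p.2 * (1 - lam * s ^ (p.1 + p.2))) :=
    (isUnit_iff_ne_zero.2 (pow_ne_zero _ hq)).mul (hβ p)
  have hX : IsWeightedShift Bas (fun p => (p.1 + 1, p.2))
      (fun p => q ^ p.2 * (1 - lam * s ^ (p.1 + p.2))) Rx := fun ⟨m, n⟩ => by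
    rw [hBas, hBas, hRx]
  have hY : IsWeightedShift Bas (fun p => (p.1, p.2 + 1))
      (fun p => 1 - lam * s ^ (p.1 + p.2)) Ry := fun ⟨m, n⟩ => by
    rw [hBas, hBas, hRy]
  have hYinj : Function.Injective Ry :=
    hY.injective (Prod.map_injective.2 ⟨Function.injective_id, add_left_injective 1⟩) hβ
  have hcomm : Rx ∘ₗ Ry = q • (Ry ∘ₗ Rx) := Bas.ext fun ⟨m, n⟩ => by
    simp only [LinearMap.comp_apply, LinearMap.smul_apply, hX (m, n), hY (m, n), hX (m, n + 1),
      hY (m + 1, n), map_smul, smul_smul]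
    ring_nf
  have hone : (1 : A) = Bas (0, 0) := by rw [hBas, pow_zero, pow_zero, one_mul]
  rw [range_coprod_eq_span hX hY hα hβ, hone]
  exact ⟨ker_prod_neg_smul_eq_bot q hYinj,
    ker_coprod_eq_range_prod q hYinj hcomm fun _ => mem_range_of_apply_mem_range hX hY hα hβ,
    Bas.span_mkQ_of_span_compl (0, 0), Bas.mkQ_ne_zero_of_span_compl (0, 0)⟩

/-- Let `q` (with fixed square root `s`, `s² = q`) be not a root of
unity and `λ ∈ ℂˣ` with `λ ∉ {q^{-n/2} : n ∈ ℕ}`.  On the quantum plane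
`A = ℂ⟨x,y⟩/(yx - qxy)` (with basis `x^m y^n`), consider the right action
`x^m y^n ◁ x = q^n (1 - λ q^{(m+n)/2}) x^{m+1} y^n`,
`x^m y^n ◁ y = (1 - λ q^{(m+n)/2}) x^m y^{n+1}` (given by the operators `Rx`, `Ry`),
and the complex `0 → A → A ⊕ A → A → 0` with `g₂(a) = (a ◁ y, -q (a ◁ x))`,
`g₁(a,b) = a ◁ x + b ◁ y`.  Then `ker g₂ = 0`, `ker g₁ = im g₂`, and `A / im g₁ ≅ ℂ`,
spanned by the class of `1`. -/
theorem stmt8 {A : Type*} [Ring A] [Algebra ℂ A] (q s lam : ℂ)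
    (hq : q ≠ 0) (hroot : ∀ n : ℕ, n ≠ 0 → q ^ n ≠ 1) (hs : s ^ 2 = q)
    (hlam : lam ≠ 0) (hlam' : ∀ n : ℕ, lam ≠ (s ^ n)⁻¹)
    (x y : A) (hrel : y * x = q • (x * y))
    (Bas : Module.Basis (ℕ × ℕ) ℂ A) (hBas : ∀ m n : ℕ, Bas (m, n) = x ^ m * y ^ n)
    (Rx Ry : A →ₗ[ℂ] A)
    (hRx : ∀ m n : ℕ, Rx (x ^ m * y ^ n) =
      (q ^ n * (1 - lam * s ^ (m + n))) • (x ^ (m + 1) * y ^ n))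
    (hRy : ∀ m n : ℕ, Ry (x ^ m * y ^ n) =
      (1 - lam * s ^ (m + n)) • (x ^ m * y ^ (n + 1))) :
    LinearMap.ker (LinearMap.prod Ry (-(q • Rx))) = ⊥ ∧
    LinearMap.ker (Rx ∘ₗ LinearMap.fst ℂ A A + Ry ∘ₗ LinearMap.snd ℂ A A) =
      LinearMap.range (LinearMap.prod Ry (-(q • Rx))) ∧
    Submodule.span ℂ
        {(LinearMap.range (Rx ∘ₗ LinearMap.fst ℂ A A + Ry ∘ₗ LinearMap.snd ℂ A A)).mkQ 1} =
      (⊤ : Submodule ℂ _) ∧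
    (LinearMap.range (Rx ∘ₗ LinearMap.fst ℂ A A + Ry ∘ₗ LinearMap.snd ℂ A A)).mkQ 1 ≠ 0 :=
  stmt8_general q s lam hq hlam' x y Bas hBas Rx Ry hRx hRy
end

section
/- Let $A$ be the 3-dimensional unital $\mathbb{C}$-algebra with basis $1, x, y$ where $x^2 = y^2 = xy = yx = 0$, and let $\sigma$ be the algebra automorphism with $\sigma(x) = x$, $\sigma(y) = x + y$. Then in the twisted Hochschild complex (with $T_1 = \sigma \otimes \sigma$ acting on $A \otimes A$ and differential $b(a \otimes b) = ab - \sigma(b)a$), the element $1 \otimes x$ is a cycle in $C^1_* = \ker(\mathrm{coker}(\mathrm{id} - T))$ representing a nontrivial class in $H_1(C^1_*)$, i.e. $1 \otimes x \in \mathrm{im}(\mathrm{id} - T_1)$, $b(1 \otimes x) = 0$, but $1 \otimes x \notin b(\mathrm{im}(\mathrm{id} - T_2))$. -/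
set_option maxHeartbeats 1000000
set_option synthInstance.maxHeartbeats 2000000

open TensorProduct

noncomputable section

namespace Stmt13

/-- The 3-dimensional algebra `A = ℂ{1, x, y}` with `x² = y² = xy = yx = 0`. -/
abbrev A : Type := TrivSqZeroExt ℂ (ℂ × ℂ)

/-- The generator `x`. -/
def xx : A := TrivSqZeroExt.inr (1, 0)

/-- The generator `y`. -/
def yy : A := TrivSqZeroExt.inr (0, 1)

/-- The twisted Hochschild boundary `b₁(a ⊗ b) = ab - σ(b)a`. -/
def b1 (σ : A →ₗ[ℂ] A) : A ⊗[ℂ] A →ₗ[ℂ] A :=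
  TensorProduct.lift
    (LinearMap.mk₂ ℂ (fun a b => a * b - σ b * a)
      (fun a a' b => by (try dsimp only); rw [add_mul, mul_add]; abel)
      (fun c a b => by (try dsimp only); rw [smul_mul_assoc, mul_smul_comm, smul_sub])
      (fun a b b' => by (try dsimp only); rw [map_add, mul_add, add_mul]; abel)
      (fun c a b => by (try dsimp only); rw [map_smul, mul_smul_comm, smul_mul_assoc, smul_sub]))

/-- The twisted Hochschild boundary
`b₂(a₀ ⊗ a₁ ⊗ a₂) = a₀a₁ ⊗ a₂ - a₀ ⊗ a₁a₂ + σ(a₂)a₀ ⊗ a₁`. -/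
def b2 (σ : A →ₗ[ℂ] A) : A ⊗[ℂ] (A ⊗[ℂ] A) →ₗ[ℂ] A ⊗[ℂ] A :=
  (LinearMap.rTensor A (LinearMap.mul' ℂ A) ∘ₗ (TensorProduct.assoc ℂ A A A).symm.toLinearMap)
  - LinearMap.lTensor A (LinearMap.mul' ℂ A)
  + (LinearMap.rTensor A
        (LinearMap.mul' ℂ A ∘ₗ (TensorProduct.comm ℂ A A).toLinearMap ∘ₗ
          LinearMap.lTensor A σ) ∘ₗ
      (TensorProduct.assoc ℂ A A A).symm.toLinearMap ∘ₗ
      LinearMap.lTensor A (TensorProduct.comm ℂ A A).toLinearMap)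

instance : AddCommGroup (A ⊗[ℂ] A) := inferInstance
instance : AddCommGroup (A ⊗[ℂ] (A ⊗[ℂ] A)) := inferInstance

/-- `id - T₂` on `A ⊗ A ⊗ A`, where `T₂ = σ ⊗ σ ⊗ σ`. -/
def oneMinusT2 (σ : A →ₗ[ℂ] A) : A ⊗[ℂ] (A ⊗[ℂ] A) →ₗ[ℂ] A ⊗[ℂ] (A ⊗[ℂ] A) :=
  (LinearMap.id : A ⊗[ℂ] (A ⊗[ℂ] A) →ₗ[ℂ] A ⊗[ℂ] (A ⊗[ℂ] A)) -
    TensorProduct.map σ (TensorProduct.map σ σ)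

/-- `id - T₁` on `A ⊗ A`, where `T₁ = σ ⊗ σ`. -/
def oneMinusT1 (σ : A →ₗ[ℂ] A) : A ⊗[ℂ] A →ₗ[ℂ] A ⊗[ℂ] A :=
  (LinearMap.id : A ⊗[ℂ] A →ₗ[ℂ] A ⊗[ℂ] A) - TensorProduct.map σ σ

/-- The functional `f(a ⊗ b) = a.fst * b.snd.1`, which vanishes on
`b₂(im(id - T₂))` but sends `1 ⊗ x` to `1`. -/
def ff : A ⊗[ℂ] A →ₗ[ℂ] ℂ :=
  TensorProduct.lift
    (LinearMap.mk₂ ℂ (fun a b => a.fst * b.snd.1)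
      (fun a a' b => by simp [add_mul])
      (fun c a b => by simp [mul_assoc])
      (fun a b b' => by simp [mul_add])
      (fun c a b => by simp; ring))

/-- Let `A` be the 3-dimensional algebra `ℂ{1,x,y}` with
`x² = y² = xy = yx = 0` and `σ` the algebra automorphism with `σ(x) = x`,
`σ(y) = x + y`.  Then `1 ⊗ x` lies in `C¹₁ = im(id - T₁)` (`T₁ = σ ⊗ σ`), is a
`b₁`-cycle, but is not a boundary of `C¹₂ = im(id - T₂)` under `b₂`; hence it
represents a nontrivial class in `H₁(C¹_*)`. -/
theorem stmt13 (σ : A →ₗ[ℂ] A)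
    (hσ1 : σ 1 = 1) (hσx : σ xx = xx) (hσy : σ yy = xx + yy)
    (hmul : ∀ a b : A, σ (a * b) = σ a * σ b) (hbij : Function.Bijective σ) :
    ((1 : A) ⊗ₜ[ℂ] xx ∈ LinearMap.range (oneMinusT1 σ)) ∧
    b1 σ ((1 : A) ⊗ₜ[ℂ] xx) = 0 ∧
    (1 : A) ⊗ₜ[ℂ] xx ∉ (LinearMap.range (oneMinusT2 σ)).map (b2 σ) := by
  -- coordinate description of σ
  have hσ' : ∀ a : A, σ a =
      (TrivSqZeroExt.inl a.fst + TrivSqZeroExt.inr (a.snd.1 + a.snd.2, a.snd.2) : A) := by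
    intro a
    have ha : a = a.fst • (1 : A) + a.snd.1 • xx + a.snd.2 • yy := by
      refine TrivSqZeroExt.ext ?_ ?_ <;>
        simp [xx, yy, Prod.ext_iff]
    calc σ a = σ (a.fst • (1 : A) + a.snd.1 • xx + a.snd.2 • yy) := by rw [← ha]
      _ = a.fst • σ 1 + a.snd.1 • σ xx + a.snd.2 • σ yy := by
          simp [map_add, map_smul]
      _ = _ := by
          rw [hσ1, hσx, hσy]
          refine TrivSqZeroExt.ext ?_ ?_ <;>
            simp [xx, yy, Prod.ext_iff] <;> ring
  have hkey : ∀ v : A ⊗[ℂ] (A ⊗[ℂ] A), ff (b2 σ (oneMinusT2 σ v)) = 0 := by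
    have h0 : (ff ∘ₗ b2 σ ∘ₗ oneMinusT2 σ) = 0 := by
      apply TensorProduct.ext
      apply LinearMap.ext; intro a
      apply TensorProduct.ext
      apply LinearMap.ext; intro b
      apply LinearMap.ext; intro c
      simp only [LinearMap.compr₂_apply, LinearMap.compr₂ₛₗ_apply, TensorProduct.mk_apply, LinearMap.comp_apply,
        LinearMap.zero_apply, oneMinusT2, b2, ff, LinearMap.sub_apply, LinearMap.add_apply,
        LinearMap.id_apply, TensorProduct.map_tmul, LinearMap.lTensor_tmul,
        LinearMap.rTensor_tmul, LinearEquiv.coe_coe, TensorProduct.assoc_symm_tmul,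
        TensorProduct.comm_tmul, LinearMap.mul'_apply, map_sub, map_add,
        TensorProduct.lift.tmul, LinearMap.mk₂_apply]
      simp only [hσ', TrivSqZeroExt.fst_mul, TrivSqZeroExt.snd_mul, TrivSqZeroExt.fst_mk,
        TrivSqZeroExt.snd_mk, Prod.smul_fst, Prod.smul_snd, smul_eq_mul,
        MulOpposite.smul_eq_mul_unop, MulOpposite.unop_op, Prod.fst_add, Prod.snd_add,
        op_smul_eq_smul, TrivSqZeroExt.fst_add, TrivSqZeroExt.snd_add, TrivSqZeroExt.fst_inl, TrivSqZeroExt.snd_inl, TrivSqZeroExt.fst_inr, TrivSqZeroExt.snd_inr]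
      ring
    intro v
    simpa using LinearMap.congr_fun h0 v
  refine ⟨⟨-((1 : A) ⊗ₜ[ℂ] yy), ?_⟩, ?_, ?_⟩
  · simp only [oneMinusT1, LinearMap.sub_apply, LinearMap.id_apply, map_neg,
      TensorProduct.map_tmul, hσ1, hσy, TensorProduct.tmul_add]
    abel
  · simp [b1, hσx]
  · rintro ⟨w, ⟨v, rfl⟩, hv⟩
    have h1 : ff ((1 : A) ⊗ₜ[ℂ] xx) = 0 := by rw [← hv]; exact hkey v
    have h2 : ff ((1 : A) ⊗ₜ[ℂ] xx) = 1 := by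
      simp [ff, xx]
    rw [h2] at h1
    exact one_ne_zero h1

end Stmt13

end
end
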